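/- The unique solution x* in (0,1] of the equation tan(√2 x) = 2√2 / x exists and satisfies 0.892 ≤ x* ≤ 0.899. -/

import Mathlib

/-!
Substituting `t = √2 x` turns the equation into `t tan t = 4`. On `[0, π/2)` the function
`t ↦ t tan t` is strictly increasing, so there is at most one root, and the intermediate value
theorem locates it once `t tan t` is compared with `4` at `t = √2 · 0.892 ≈ 1.2615` and
`t = √2 · 0.899 ≈ 1.2714`. Near `π/2` we write `tan t = cos u / sin u` with `u = π/2 - t ≈ 0.3`,
where low-order Taylor bounds for `sin u` and `cos u` are already accurate enough.
-/

open Real Set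

lemma cos_le_one_sub_sq_div_two_add {x : ℝ} (hx : |x| ≤ 1) :
    cos x ≤ 1 - x ^ 2 / 2 + x ^ 4 * (5 / 96) := by
  have h := (abs_le.1 (cos_bound hx)).2
  rw [Even.pow_abs ⟨2, rfl⟩] at h
  linarith

lemma strictMonoOn_mul_tan : StrictMonoOn (fun t : ℝ => t * tan t) (Ico 0 (π / 2)) := by
  intro a ha b hb hab
  have h_tan_nonneg : 0 ≤ tan a :=
    tan_nonneg_of_nonneg_of_le_pi_div_two ha.1 (by linarith [ha.2])
  have h_tan_lt : tan a < tan b :=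
    tan_lt_tan_of_lt_of_lt_pi_div_two (by linarith [ha.1, pi_pos]) hb.2 hab
  calc a * tan a ≤ b * tan a := by gcongr
    _ < b * tan b := by gcongr; linarith [ha.1]

lemma mul_tan_lt_four {t : ℝ} (ht : 1.26 ≤ t) (ht' : t ≤ 1.2617) : t * tan t < 4 := by
  obtain ⟨u, rfl⟩ : ∃ u, t = π / 2 - u := ⟨π / 2 - t, by ring⟩
  have hu : 0.309 ≤ u ∧ u ≤ 0.311 := by constructor <;> linarith [pi_gt_d6, pi_lt_d6]
  have hsin : u - u ^ 3 / 6 ≤ sin u := sin_ge_sub_cube (by linarith)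
  have hcos : cos u ≤ 1 - u ^ 2 / 2 + u ^ 4 * (5 / 96) :=
    cos_le_one_sub_sq_div_two_add (by rw [abs_le]; constructor <;> linarith)
  have hcos_nonneg : 0 ≤ cos u := cos_nonneg_of_mem_Icc ⟨by linarith, by linarith [pi_gt_three]⟩
  rw [tan_pi_div_two_sub, tan_eq_sin_div_cos, inv_div, ← mul_div_assoc,
    div_lt_iff₀ (sin_pos_of_pos_of_lt_pi (by linarith) (by linarith [pi_gt_three]))]
  calc (π / 2 - u) * cos u ≤ 1.2617 * (1 - u ^ 2 / 2 + u ^ 4 * (5 / 96)) :=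
        mul_le_mul ht' hcos hcos_nonneg (by norm_num)
    _ < 4 * (u - u ^ 3 / 6) := by nlinarith [pow_le_pow_left₀ (by linarith) hu.2 4]
    _ ≤ 4 * sin u := by linarith

lemma four_lt_mul_tan {t : ℝ} (ht : 1.2712 ≤ t) (ht' : t ≤ 1.28) : 4 < t * tan t := by
  obtain ⟨u, rfl⟩ : ∃ u, t = π / 2 - u := ⟨π / 2 - t, by ring⟩
  have hu : 0.29 ≤ u ∧ u ≤ 0.2996 := by constructor <;> linarith [pi_gt_d6, pi_lt_d6]
  rw [tan_pi_div_two_sub, tan_eq_sin_div_cos, inv_div, ← mul_div_assoc,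
    lt_div_iff₀ (sin_pos_of_pos_of_lt_pi (by linarith) (by linarith [pi_gt_three]))]
  calc 4 * sin u ≤ 4 * u := by linarith [sin_le (x := u) (by linarith)]
    _ < 1.2712 * (1 - u ^ 2 / 2) := by nlinarith
    _ ≤ (π / 2 - u) * cos u :=
        mul_le_mul ht one_sub_sq_div_two_le_cos (by nlinarith) (by linarith)

lemma tan_sqrt_two_mul_eq_iff {x : ℝ} (hx : x ≠ 0) :
    tan (√2 * x) = 2 * √2 / x ↔ √2 * x * tan (√2 * x) = 4 := by
  have h2 : √2 ^ 2 = 2 := sq_sqrt zero_le_two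
  have hs : √2 ≠ 0 := by positivity
  rw [eq_div_iff hx]
  constructor
  · intro h
    linear_combination √2 * h + 2 * h2
  · intro h
    apply mul_left_cancel₀ hs
    linear_combination h - 2 * h2

lemma sqrt_two_mul_mem_Ico {x : ℝ} (hx : x ∈ Ioc 0 1) : √2 * x ∈ Ico 0 (π / 2) := by
  have hs : √2 < 1.5 := (sqrt_lt' (by norm_num)).2 (by norm_num)
  refine ⟨mul_nonneg (sqrt_nonneg 2) hx.1.le, ?_⟩
  nlinarith [hx.1, hx.2, pi_gt_three, sqrt_nonneg 2]

theorem stmt_15 :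
    ∃ x : ℝ, (x ∈ Set.Ioc (0 : ℝ) 1 ∧ Real.tan (Real.sqrt 2 * x) = 2 * Real.sqrt 2 / x) ∧
      (∀ y : ℝ, y ∈ Set.Ioc (0 : ℝ) 1 →
        Real.tan (Real.sqrt 2 * y) = 2 * Real.sqrt 2 / y → y = x) ∧
      0.892 ≤ x ∧ x ≤ 0.899 := by
  have hs_lo : 1.4142 < √2 := (lt_sqrt (by norm_num)).2 (by norm_num)
  have hs_hi : √2 < 1.41422 := (sqrt_lt' (by norm_num)).2 (by norm_num)
  have hI : Icc (0.892 : ℝ) 0.899 ⊆ Ioc 0 1 := fun x hx => ⟨by linarith [hx.1], by linarith [hx.2]⟩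
  have hcont : ContinuousOn (fun x => √2 * x * tan (√2 * x)) (Icc 0.892 0.899) := by
    refine (continuousOn_const.mul continuousOn_id).mul (continuousOn_tan.comp
      (continuousOn_const.mul continuousOn_id) fun x hx => ?_)
    obtain ⟨h0, hπ⟩ := sqrt_two_mul_mem_Ico (hI hx)
    exact (cos_pos_of_mem_Ioo ⟨by linarith [pi_pos], hπ⟩).ne'
  obtain ⟨x, hx, hx_root⟩ := intermediate_value_Icc (by norm_num) hcont
    ⟨(mul_tan_lt_four (by nlinarith) (by nlinarith)).le,
      (four_lt_mul_tan (by nlinarith) (by nlinarith)).le⟩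
  refine ⟨x, ⟨hI hx, (tan_sqrt_two_mul_eq_iff (hI hx).1.ne').2 hx_root⟩, fun y hy hy_root => ?_,
    hx.1, hx.2⟩
  have := strictMonoOn_mul_tan.injOn (sqrt_two_mul_mem_Ico hy) (sqrt_two_mul_mem_Ico (hI hx))
    (((tan_sqrt_two_mul_eq_iff hy.1.ne').1 hy_root).trans hx_root.symm)
  exact mul_left_cancel₀ (sqrt_ne_zero'.2 two_pos) this
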